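/- arXiv:2506.20185 — 5 statements merged into one kernel-verified Lean document; each statement's English description precedes it below -/
import Mathlib

section
/- Let Z be a random variable on ℝᵈ with distribution ρ. Then E[F_σ(Z) · 1{g(Z) > 0}] ≤ e^{-μ/σ} + P(0 < g(Z) < 2μ), where F_σ(x) = (1 + exp((-μ + g(x))/σ))⁻¹. -/
/-!
In terms of `t = g (Z ω)` the integrand is the logistic weight `sigmoid ((μ - t) / σ)` on `t > 0`.
It is at most `1` on the window `0 < t < 2μ`, and for `t ≥ 2μ` it is at most
`exp ((μ - t) / σ) ≤ exp (-μ / σ)`; integrating this pointwise bound gives the claim.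
-/

open MeasureTheory Real

lemma Real.sigmoid_le_exp (x : ℝ) : sigmoid x ≤ exp x := by
  rw [sigmoid_def, ← inv_inv (exp x), ← exp_neg]
  exact inv_anti₀ (exp_pos _) (le_add_of_nonneg_left zero_le_one)

lemma logistic_weight_le_exp_add_indicator {σ μ t : ℝ} (hσ : 0 ≤ σ) :
    (if 0 < t then (1 + exp ((-μ + t) / σ))⁻¹ else 0)
      ≤ exp (-μ / σ) + (Set.Ioo 0 (2 * μ)).indicator 1 t := by
  have hexp := exp_pos (-μ / σ)
  by_cases ht : 0 < t
  · rw [if_pos ht]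
    have hweight : (1 + exp ((-μ + t) / σ))⁻¹ = sigmoid ((μ - t) / σ) := by
      rw [sigmoid_def, ← neg_div, neg_sub, sub_eq_neg_add]
    by_cases ht' : t < 2 * μ
    · rw [Set.indicator_of_mem (show t ∈ Set.Ioo 0 (2 * μ) from ⟨ht, ht'⟩), hweight,
        Pi.one_apply]
      linarith [sigmoid_le_one ((μ - t) / σ)]
    · rw [Set.indicator_of_notMem (fun h => ht' h.2), add_zero, hweight]
      calc sigmoid ((μ - t) / σ) ≤ exp ((μ - t) / σ) := sigmoid_le_exp _
        _ ≤ exp (-μ / σ) := exp_le_exp.mpr (div_le_div_of_nonneg_right (by linarith) hσ)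
  · rw [if_neg ht]
    have : (0 : ℝ) ≤ (Set.Ioo 0 (2 * μ)).indicator 1 t :=
      Set.indicator_nonneg (fun _ _ => zero_le_one) t
    linarith

/-- Neither `f` nor `s` need be measurable: `f` is dominated through the measurable hull of `s`,
which has the same measure. -/
lemma integral_le_add_measureReal_of_le_add_indicator {Ω : Type*} [MeasurableSpace Ω]
    {ℙ : Measure Ω} [IsProbabilityMeasure ℙ] {f : Ω → ℝ} {c : ℝ} {s : Set Ω} (hf : 0 ≤ f)
    (h : ∀ ω, f ω ≤ c + s.indicator 1 ω) :
    ∫ ω, f ω ∂ℙ ≤ c + ℙ.real s := by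
  have hs := measurableSet_toMeasurable ℙ s
  have hind : Integrable ((toMeasurable ℙ s).indicator (1 : Ω → ℝ)) ℙ :=
    (integrable_const 1).indicator hs
  have hdom : ∀ ω, f ω ≤ c + (toMeasurable ℙ s).indicator 1 ω := fun ω =>
    (h ω).trans (add_le_add_right
      (Set.indicator_le_indicator_of_subset (subset_toMeasurable ℙ s) (fun _ => zero_le_one) ω) c)
  calc ∫ ω, f ω ∂ℙ ≤ ∫ ω, (c + (toMeasurable ℙ s).indicator 1 ω) ∂ℙ :=
        integral_mono_of_nonneg (ae_of_all _ hf) ((integrable_const c).add hind)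
          (ae_of_all _ hdom)
    _ = c + ℙ.real s := by
      rw [integral_add (integrable_const c) hind, integral_const, integral_indicator_one hs,
        measureReal_def ℙ (toMeasurable ℙ s), measure_toMeasurable]
      simp [measureReal_def]

theorem stmt3_general {d : ℕ} {Ω : Type*} [MeasurableSpace Ω] (ℙ : Measure Ω)
    [IsProbabilityMeasure ℙ]
    (g : (Fin d → ℝ) → ℝ)
    (Z : Ω → (Fin d → ℝ))
    (σ μ : ℝ) (hσ : 0 < σ) :
    ∫ ω, (if 0 < g (Z ω) then (1 + Real.exp ((-μ + g (Z ω)) / σ))⁻¹ else 0) ∂ℙ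
      ≤ Real.exp (-μ / σ) + (ℙ {ω | 0 < g (Z ω) ∧ g (Z ω) < 2 * μ}).toReal := by
  refine integral_le_add_measureReal_of_le_add_indicator (fun ω => ?_)
    (fun ω => logistic_weight_le_exp_add_indicator hσ.le)
  dsimp only [Pi.zero_apply]
  split_ifs <;> positivity

theorem stmt3 {d : ℕ} {Ω : Type*} [MeasurableSpace Ω] (ℙ : Measure Ω)
    [IsProbabilityMeasure ℙ]
    (g : (Fin d → ℝ) → ℝ) (hg : Measurable g)
    (Z : Ω → (Fin d → ℝ)) (hZ : Measurable Z)
    (σ μ : ℝ) (hσ : 0 < σ) (hμ : 0 < μ) :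
    ∫ ω, (if 0 < g (Z ω) then (1 + Real.exp ((-μ + g (Z ω)) / σ))⁻¹ else 0) ∂ℙ
      ≤ Real.exp (-μ / σ) + (ℙ {ω | 0 < g (Z ω) ∧ g (Z ω) < 2 * μ}).toReal :=
  stmt3_general ℙ g Z σ μ hσ
end

section
/- Let Z ∼ ρ on ℝᵈ, A = {x : g(x) ≤ 0}, p = P(g(Z) ≤ 0), and p_σ = E[F_σ(Z)]. Then |p_σ − p| ≤ 2e^{-μ/σ} + P(0 < g(Z) < 2μ). -/
/-! The logistic cutoff `F t = (1 + exp ((t - μ) / σ))⁻¹` is within `exp (-μ / σ)` of `1` for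
`t ≤ 0` and within `exp (-μ / σ)` of `0` for `t ≥ 2μ`; on the window `0 < t < 2μ` it differs from
the indicator of `t ≤ 0` by at most `1`. Integrating this pointwise bound against the law of
`g (Z)` gives the estimate. -/

open MeasureTheory Set

noncomputable def logisticCutoff (σ μ t : ℝ) : ℝ :=
  (1 + Real.exp ((-μ + t) / σ))⁻¹

section logisticCutoff

variable {σ μ t : ℝ}

theorem logisticCutoff_pos : 0 < logisticCutoff σ μ t := by
  unfold logisticCutoff
  positivity

theorem logisticCutoff_le_one : logisticCutoff σ μ t ≤ 1 :=
  inv_le_one_of_one_le₀ (le_add_of_nonneg_right (Real.exp_pos _).le)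

theorem one_sub_logisticCutoff_le (hσ : 0 < σ) (ht : t ≤ 0) :
    1 - logisticCutoff σ μ t ≤ Real.exp (-μ / σ) := by
  set a := Real.exp ((-μ + t) / σ)
  have ha : 0 < a := Real.exp_pos _
  calc 1 - logisticCutoff σ μ t = a / (1 + a) := by
        unfold logisticCutoff
        field_simp
        ring
    _ ≤ a := div_le_self ha.le (by linarith)
    _ ≤ Real.exp (-μ / σ) := Real.exp_le_exp.mpr (div_le_div_of_nonneg_right (by linarith) hσ.le)

theorem logisticCutoff_le (hσ : 0 < σ) (ht : 2 * μ ≤ t) :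
    logisticCutoff σ μ t ≤ Real.exp (-μ / σ) := by
  calc logisticCutoff σ μ t ≤ (Real.exp ((-μ + t) / σ))⁻¹ :=
        inv_anti₀ (Real.exp_pos _) (le_add_of_nonneg_left zero_le_one)
    _ = Real.exp ((μ - t) / σ) := by rw [← Real.exp_neg, ← neg_div, neg_add, neg_neg, sub_eq_add_neg]
    _ ≤ Real.exp (-μ / σ) := Real.exp_le_exp.mpr (div_le_div_of_nonneg_right (by linarith) hσ.le)

theorem abs_logisticCutoff_sub_indicator_le (hσ : 0 < σ) :
    |logisticCutoff σ μ t - (Iic 0).indicator 1 t|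
      ≤ Real.exp (-μ / σ) + (Ioo 0 (2 * μ)).indicator 1 t := by
  have hF₀ : 0 ≤ logisticCutoff σ μ t := logisticCutoff_pos.le
  have hF₁ : logisticCutoff σ μ t ≤ 1 := logisticCutoff_le_one
  have hE : 0 ≤ Real.exp (-μ / σ) := (Real.exp_pos _).le
  rcases le_or_gt t 0 with hnonpos | hpos
  · rw [indicator_of_mem (mem_Iic.mpr hnonpos), Pi.one_apply,
      indicator_of_notMem (fun h : t ∈ Ioo 0 (2 * μ) ↦ (not_lt.mpr hnonpos) h.1), add_zero,
      abs_sub_comm, abs_of_nonneg (sub_nonneg.mpr hF₁)]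
    exact one_sub_logisticCutoff_le hσ hnonpos
  rw [indicator_of_notMem (notMem_Iic.mpr hpos), sub_zero, abs_of_nonneg hF₀]
  rcases lt_or_ge t (2 * μ) with hlt | hge
  · rw [indicator_of_mem (mem_Ioo.mpr ⟨hpos, hlt⟩), Pi.one_apply]
    linarith
  · rw [indicator_of_notMem (fun h : t ∈ Ioo 0 (2 * μ) ↦ (not_lt.mpr hge) h.2), add_zero]
    exact logisticCutoff_le hσ hge

theorem measurable_logisticCutoff : Measurable (logisticCutoff σ μ) :=
  (measurable_const.add ((measurable_const.add measurable_id).div_const σ).exp).inv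

end logisticCutoff

theorem abs_integral_sub_measureReal_le {Ω : Type*} [MeasurableSpace Ω] {ℙ : Measure Ω}
    [IsProbabilityMeasure ℙ] {f : Ω → ℝ} {A S : Set Ω} {c : ℝ} (hf : Integrable f ℙ)
    (hA : MeasurableSet A) (hS : MeasurableSet S)
    (hfAS : ∀ ω, |f ω - A.indicator 1 ω| ≤ c + S.indicator 1 ω) :
    |∫ ω, f ω ∂ℙ - ℙ.real A| ≤ c + ℙ.real S := by
  have hA₁ : Integrable (A.indicator (1 : Ω → ℝ)) ℙ := (integrable_const 1).indicator hA
  have hS₁ : Integrable (S.indicator (1 : Ω → ℝ)) ℙ := (integrable_const 1).indicator hS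
  calc |∫ ω, f ω ∂ℙ - ℙ.real A| = ‖∫ ω, (f ω - A.indicator 1 ω) ∂ℙ‖ := by
        rw [integral_sub hf hA₁, integral_indicator_one hA, Real.norm_eq_abs]
    _ ≤ ∫ ω, (c + S.indicator 1 ω) ∂ℙ :=
        norm_integral_le_of_norm_le ((integrable_const c).add hS₁) (.of_forall hfAS)
    _ = c + ℙ.real S := by
        rw [integral_add (integrable_const c) hS₁, integral_indicator_one hS, integral_const,
          probReal_univ, one_smul]

theorem abs_integral_logisticCutoff_sub_measureReal_le {Ω : Type*} [MeasurableSpace Ω]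
    {ℙ : Measure Ω} [IsProbabilityMeasure ℙ] {X : Ω → ℝ} (hX : Measurable X) {σ μ : ℝ}
    (hσ : 0 < σ) :
    |∫ ω, logisticCutoff σ μ (X ω) ∂ℙ - ℙ.real (X ⁻¹' Iic 0)|
      ≤ Real.exp (-μ / σ) + ℙ.real (X ⁻¹' Ioo 0 (2 * μ)) := by
  refine abs_integral_sub_measureReal_le ?_ (hX measurableSet_Iic) (hX measurableSet_Ioo)
    fun ω ↦ ?_
  · refine .of_bound (measurable_logisticCutoff.comp hX).aestronglyMeasurable 1 (.of_forall ?_)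
    intro ω
    rw [Real.norm_eq_abs, abs_of_pos logisticCutoff_pos]
    exact logisticCutoff_le_one
  · exact abs_logisticCutoff_sub_indicator_le hσ

theorem stmt4_general {d : ℕ} {Ω : Type*} [MeasurableSpace Ω] (ℙ : Measure Ω)
    [IsProbabilityMeasure ℙ]
    (g : (Fin d → ℝ) → ℝ) (hg : Measurable g)
    (Z : Ω → (Fin d → ℝ)) (hZ : Measurable Z)
    (σ μ : ℝ) (hσ : 0 < σ)
    (p pσ : ℝ)
    (hp : p = (ℙ {ω | g (Z ω) ≤ 0}).toReal)
    (hpσ : pσ = ∫ ω, (1 + Real.exp ((-μ + g (Z ω)) / σ))⁻¹ ∂ℙ) :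
    |pσ - p| ≤ 2 * Real.exp (-μ / σ) + (ℙ {ω | 0 < g (Z ω) ∧ g (Z ω) < 2 * μ}).toReal := by
  have h : |pσ - p| ≤ Real.exp (-μ / σ) + (ℙ {ω | 0 < g (Z ω) ∧ g (Z ω) < 2 * μ}).toReal := by
    rw [hp, hpσ]
    exact abs_integral_logisticCutoff_sub_measureReal_le (hg.comp hZ) hσ
  linarith [Real.exp_pos (-μ / σ)]

theorem stmt4 {d : ℕ} {Ω : Type*} [MeasurableSpace Ω] (ℙ : Measure Ω)
    [IsProbabilityMeasure ℙ]
    (g : (Fin d → ℝ) → ℝ) (hg : Measurable g)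
    (Z : Ω → (Fin d → ℝ)) (hZ : Measurable Z)
    (σ μ : ℝ) (hσ : 0 < σ) (hμ : 0 < μ)
    (p pσ : ℝ)
    (hp : p = (ℙ {ω | g (Z ω) ≤ 0}).toReal)
    (hpσ : pσ = ∫ ω, (1 + Real.exp ((-μ + g (Z ω)) / σ))⁻¹ ∂ℙ) :
    |pσ - p| ≤ 2 * Real.exp (-μ / σ) + (ℙ {ω | 0 < g (Z ω) ∧ g (Z ω) < 2 * μ}).toReal :=
  stmt4_general ℙ g hg Z hZ σ μ hσ p pσ hp hpσ
end

section
/- Under condition lim_{σ→0} μ(σ) = 0 and lim_{σ→0} e^{-μ(σ)/σ}/σ = 0, the normalizing constant p_σ = E[F_σ(Z)] converges to p = P(g(Z) ≤ 0) as σ → 0⁺, provided g(Z) ≠ 0 almost surely. -/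
open MeasureTheory Filter Topology

theorem stmt5 {d : ℕ} {Ω : Type*} [MeasurableSpace Ω] (ℙ : Measure Ω)
    [IsProbabilityMeasure ℙ]
    (g : (Fin d → ℝ) → ℝ) (hg : Measurable g)
    (Z : Ω → (Fin d → ℝ)) (hZ : Measurable Z)
    (hzero : ℙ {ω | g (Z ω) = 0} = 0)
    (μ : ℝ → ℝ) (hμpos : ∀ σ > 0, 0 < μ σ)
    (hμ : Tendsto μ (nhdsWithin 0 (Set.Ioi 0)) (nhds 0))
    (hexp : Tendsto (fun σ : ℝ => Real.exp (-μ σ / σ) / σ)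
      (nhdsWithin 0 (Set.Ioi 0)) (nhds 0)) :
    Tendsto (fun σ : ℝ => ∫ ω, (1 + Real.exp ((-μ σ + g (Z ω)) / σ))⁻¹ ∂ℙ)
      (nhdsWithin 0 (Set.Ioi 0)) (nhds ((ℙ {ω | g (Z ω) ≤ 0}).toReal)) := by
  have hS : MeasurableSet {ω | g (Z ω) ≤ 0} :=
    measurableSet_le (hg.comp hZ) measurable_const
  have hInd : (ℙ {ω | g (Z ω) ≤ 0}).toReal
      = ∫ ω, Set.indicator {ω | g (Z ω) ≤ 0} (fun _ => (1:ℝ)) ω ∂ℙ := by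
    exact (MeasureTheory.integral_indicator_one hS).symm
  rw [hInd]
  apply tendsto_integral_filter_of_dominated_convergence (fun _ => (1:ℝ))
  · filter_upwards with σ
    exact (Measurable.inv (measurable_const.add
      ((((hg.comp hZ).const_add (-μ σ)).div_const σ).exp))).aestronglyMeasurable
  · filter_upwards with σ
    filter_upwards with ω
    have h0 : (0:ℝ) < 1 + Real.exp ((-μ σ + g (Z ω)) / σ) := by positivity
    rw [Real.norm_eq_abs, abs_of_pos (inv_pos.2 h0)]
    rw [inv_le_one_iff₀]
    right
    linarith [Real.exp_pos ((-μ σ + g (Z ω)) / σ)]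
  · exact integrable_const 1
  · have hne : ∀ᵐ ω ∂ℙ, g (Z ω) ≠ 0 := by
      rw [ae_iff]
      simpa using hzero
    filter_upwards [hne] with ω hω
    set c := g (Z ω) with hc
    have hinv : Tendsto (fun σ : ℝ => σ⁻¹) (nhdsWithin 0 (Set.Ioi 0)) atTop :=
      tendsto_inv_nhdsGT_zero
    have hnum : Tendsto (fun σ : ℝ => -μ σ + c) (nhdsWithin 0 (Set.Ioi 0)) (nhds c) := by
      have := (hμ.neg.add_const c)
      simpa using this
    rcases lt_or_gt_of_ne hω with hlt | hgt
    · -- c < 0 : limit is 1, indicator value is 1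
      have hmem : ω ∈ {ω | g (Z ω) ≤ 0} := le_of_lt hlt
      rw [Set.indicator_of_mem hmem]
      have harg : Tendsto (fun σ : ℝ => (-μ σ + c) / σ) (nhdsWithin 0 (Set.Ioi 0)) atBot := by
        simp only [div_eq_mul_inv]
        exact Tendsto.neg_mul_atTop hlt hnum hinv
      have hexp0 : Tendsto (fun σ : ℝ => Real.exp ((-μ σ + c) / σ))
          (nhdsWithin 0 (Set.Ioi 0)) (nhds 0) :=
        Real.tendsto_exp_atBot.comp harg
      have : Tendsto (fun σ : ℝ => (1 + Real.exp ((-μ σ + c) / σ))⁻¹)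
          (nhdsWithin 0 (Set.Ioi 0)) (nhds ((1 + 0)⁻¹)) :=
        ((tendsto_const_nhds.add hexp0)).inv₀ (by norm_num)
      simpa using this
    · -- c > 0 : limit is 0, indicator value is 0
      have hmem : ω ∉ {ω | g (Z ω) ≤ 0} := by
        simp only [Set.mem_setOf_eq, not_le]
        exact hgt
      rw [Set.indicator_of_notMem hmem]
      have harg : Tendsto (fun σ : ℝ => (-μ σ + c) / σ) (nhdsWithin 0 (Set.Ioi 0)) atTop := by
        simp only [div_eq_mul_inv]
        exact Tendsto.pos_mul_atTop hgt hnum hinv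
      have hexpT : Tendsto (fun σ : ℝ => Real.exp ((-μ σ + c) / σ))
          (nhdsWithin 0 (Set.Ioi 0)) atTop :=
        Real.tendsto_exp_atTop.comp harg
      exact (tendsto_const_nhds.add_atTop hexpT).inv_tendsto_atTop
end

section
/- Let g : ℝᵈ → ℝ be differentiable, K-Lipschitz, G-smooth (∇g is G-Lipschitz), and bounded by r > 0. Then the gradient of V_σ(x) = −log F_σ(x) + ‖x‖²/2, given by ∇V_σ(x) = (∇g(x)/σ)(1 − F_σ(x)) + x, is L_σ-Lipschitz with L_σ = e^{(-μ+r)/σ} K²/σ² + 2G/σ + 1. -/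
/-! The gradient is `a • g' + id` with coefficient `a = σ⁻¹ (1 - F_σ)`. The coefficient is bounded
by `σ⁻¹` because `0 < F_σ ≤ 1`, and it is Lipschitz: the logistic map `t ↦ (1 + eᵗ)⁻¹` is
`e^M`-Lipschitz on `(-∞, M]`, and `(-μ + g) / σ` takes values below `M = (-μ + r) / σ` and is
`K / σ`-Lipschitz. The Leibniz-type estimate
`‖a x • g' x - a y • g' y‖ ≤ |a x| ‖g' x - g' y‖ + |a x - a y| ‖g' y‖` then gives the constant. -/

noncomputable def Fsig {E : Type*} (g : E → ℝ) (σ μ : ℝ) (x : E) : ℝ :=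
  (1 + Real.exp ((-μ + g x) / σ))⁻¹

open Real

lemma abs_exp_sub_exp_le_of_le {s t M : ℝ} (hs : s ≤ M) (ht : t ≤ M) :
    |exp s - exp t| ≤ exp M * |s - t| := by
  wlog hts : t ≤ s generalizing s t
  · rw [abs_sub_comm, abs_sub_comm s]
    exact this ht hs (le_of_not_ge hts)
  -- `exp s - exp t = exp s (1 - exp (t - s))` and `1 - exp (t - s) ≤ s - t`
  have h₁ : exp s - exp t ≤ exp s * (s - t) := by
    have h := add_one_le_exp (t - s)
    have h' : exp s * exp (t - s) = exp t := by rw [← exp_add]; ring_nf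
    nlinarith [exp_pos s]
  rw [abs_of_nonneg (sub_nonneg.2 (exp_le_exp.2 hts)), abs_of_nonneg (sub_nonneg.2 hts)]
  exact h₁.trans (mul_le_mul_of_nonneg_right (exp_le_exp.2 hs) (sub_nonneg.2 hts))

lemma abs_inv_one_add_exp_sub_le {s t M : ℝ} (hs : s ≤ M) (ht : t ≤ M) :
    |(1 + exp s)⁻¹ - (1 + exp t)⁻¹| ≤ exp M * |s - t| := by
  have hden : 1 ≤ (1 + exp s) * (1 + exp t) := by nlinarith [exp_pos s, exp_pos t]
  have heq : (1 + exp s)⁻¹ - (1 + exp t)⁻¹ = (exp t - exp s) / ((1 + exp s) * (1 + exp t)) := by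
    field_simp
    ring
  calc |(1 + exp s)⁻¹ - (1 + exp t)⁻¹|
      = |exp t - exp s| / ((1 + exp s) * (1 + exp t)) := by
        rw [heq, abs_div, abs_of_pos (by positivity : (0 : ℝ) < (1 + exp s) * (1 + exp t))]
    _ ≤ |exp t - exp s| := div_le_self (abs_nonneg _) hden
    _ ≤ exp M * |s - t| := by
        rw [abs_sub_comm (exp t)]; exact abs_exp_sub_exp_le_of_le hs ht

lemma norm_smul_sub_smul_le {F : Type*} [SeminormedAddCommGroup F] [NormedSpace ℝ F]
    (a b : ℝ) (u v : F) : ‖a • u - b • v‖ ≤ |a| * ‖u - v‖ + |a - b| * ‖v‖ := by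
  have h : a • u - b • v = a • (u - v) + (a - b) • v := by
    rw [smul_sub, sub_smul]
    abel
  rw [h, ← Real.norm_eq_abs, ← Real.norm_eq_abs]
  exact (norm_add_le _ _).trans (by rw [norm_smul, norm_smul])

section Fsig

variable {E : Type*} {g : E → ℝ} {σ μ : ℝ}

lemma abs_one_sub_Fsig_le (x : E) : |1 - Fsig g σ μ x| ≤ 1 := by
  have hpos : 0 < Fsig g σ μ x := by unfold Fsig; positivity
  have hle : Fsig g σ μ x ≤ 1 := inv_le_one_of_one_le₀ (by linarith [exp_pos ((-μ + g x) / σ)])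
  exact abs_le.2 ⟨by linarith, by linarith⟩

lemma abs_Fsig_sub_le [SeminormedAddCommGroup E] {K r : ℝ} (hσ : 0 < σ)
    (hlip : ∀ x y, |g x - g y| ≤ K * ‖x - y‖) (hr : ∀ x, g x ≤ r) (x y : E) :
    |Fsig g σ μ x - Fsig g σ μ y| ≤ exp ((-μ + r) / σ) * (K / σ) * ‖x - y‖ := by
  have hM : ∀ z, (-μ + g z) / σ ≤ (-μ + r) / σ := fun z =>
    div_le_div_of_nonneg_right (by linarith [hr z]) hσ.le
  calc |Fsig g σ μ x - Fsig g σ μ y|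
      ≤ exp ((-μ + r) / σ) * |(-μ + g x) / σ - (-μ + g y) / σ| :=
        abs_inv_one_add_exp_sub_le (hM x) (hM y)
    _ = exp ((-μ + r) / σ) * (|g x - g y| / σ) := by
        rw [div_sub_div_same, abs_div, abs_of_pos hσ, add_sub_add_left_eq_sub]
    _ ≤ exp ((-μ + r) / σ) * (K * ‖x - y‖ / σ) := by gcongr; exact hlip x y
    _ = exp ((-μ + r) / σ) * (K / σ) * ‖x - y‖ := by ring

end Fsig

theorem stmt14_general {d : ℕ} (g : EuclideanSpace ℝ (Fin d) → ℝ)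
    (g' : EuclideanSpace ℝ (Fin d) → EuclideanSpace ℝ (Fin d))
    (K G r σ μ : ℝ) (hσ : 0 < σ)
    (hlip : ∀ x y, |g x - g y| ≤ K * ‖x - y‖)
    (hKbd : ∀ x, ‖g' x‖ ≤ K)
    (hsmooth : ∀ x y, ‖g' x - g' y‖ ≤ G * ‖x - y‖)
    (hbd : ∀ x, |g x| ≤ r) :
    ∀ x y,
      ‖((σ⁻¹ * (1 - Fsig g σ μ x)) • g' x + x)
        - ((σ⁻¹ * (1 - Fsig g σ μ y)) • g' y + y)‖
      ≤ (Real.exp ((-μ + r) / σ) * K ^ 2 / σ ^ 2 + 2 * G / σ + 1) * ‖x - y‖ := by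
  intro x y
  set a := fun z => σ⁻¹ * (1 - Fsig g σ μ z)
  have ha : |a x| ≤ σ⁻¹ := by
    simpa [a, abs_mul, abs_of_pos hσ] using
      mul_le_mul_of_nonneg_left (abs_one_sub_Fsig_le x) (inv_pos.2 hσ).le
  have hF := abs_Fsig_sub_le (μ := μ) hσ hlip (fun z => (abs_le.1 (hbd z)).2) x y
  have ha_sub : |a x - a y| ≤ σ⁻¹ * (exp ((-μ + r) / σ) * (K / σ) * ‖x - y‖) := by
    rw [show a x - a y = σ⁻¹ * (Fsig g σ μ y - Fsig g σ μ x) by simp only [a]; ring,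
      abs_mul, abs_of_pos (inv_pos.2 hσ), abs_sub_comm]
    gcongr
  have hG : 0 ≤ G * ‖x - y‖ := (norm_nonneg _).trans (hsmooth x y)
  have hK : 0 ≤ K := (norm_nonneg _).trans (hKbd x)
  calc ‖(a x • g' x + x) - (a y • g' y + y)‖
      ≤ ‖a x • g' x - a y • g' y‖ + ‖x - y‖ := by
        rw [add_sub_add_comm]; exact norm_add_le _ _
    _ ≤ |a x| * ‖g' x - g' y‖ + |a x - a y| * ‖g' y‖ + ‖x - y‖ := by
        gcongr; exact norm_smul_sub_smul_le _ _ _ _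
    _ ≤ σ⁻¹ * (G * ‖x - y‖) + σ⁻¹ * (exp ((-μ + r) / σ) * (K / σ) * ‖x - y‖) * K + ‖x - y‖ := by
        gcongr
        exacts [hsmooth x y, hKbd y]
    _ ≤ (exp ((-μ + r) / σ) * K ^ 2 / σ ^ 2 + 2 * G / σ + 1) * ‖x - y‖ := by
        have : 0 ≤ σ⁻¹ * (G * ‖x - y‖) := mul_nonneg (inv_pos.2 hσ).le hG
        field_simp
        nlinarith

theorem stmt14 {d : ℕ} (g : EuclideanSpace ℝ (Fin d) → ℝ)
    (g' : EuclideanSpace ℝ (Fin d) → EuclideanSpace ℝ (Fin d))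
    (K G r σ μ : ℝ) (hr : 0 < r) (hσ : 0 < σ) (hμ : 0 < μ)
    (hgrad : ∀ x, HasGradientAt g (g' x) x)
    (hlip : ∀ x y, |g x - g y| ≤ K * ‖x - y‖)
    (hKbd : ∀ x, ‖g' x‖ ≤ K)
    (hsmooth : ∀ x y, ‖g' x - g' y‖ ≤ G * ‖x - y‖)
    (hbd : ∀ x, |g x| ≤ r) :
    ∀ x y,
      ‖((σ⁻¹ * (1 - Fsig g σ μ x)) • g' x + x)
        - ((σ⁻¹ * (1 - Fsig g σ μ y)) • g' y + y)‖
      ≤ (Real.exp ((-μ + r) / σ) * K ^ 2 / σ ^ 2 + 2 * G / σ + 1) * ‖x - y‖ :=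
  stmt14_general g g' K G r σ μ hσ hlip hKbd hsmooth hbd
end

section
/- Let g : ℝᵈ → ℝ be C² with Hessian satisfying Hess(g)(x) ≥ λ I for all x with λ ≥ 0 (g convex), and F_σ as the logistic smoothing. Then the Hessian of V_σ(x) = −log F_σ(x) + ‖x‖²/2 satisfies Hess(V_σ)(x) ≥ I for all x, i.e., V_σ is 1-strongly convex. -/
open Matrix

section Fsig

variable {E : Type*} (g : E → ℝ) (σ μ : ℝ) (x : E)

lemma Fsig_pos : 0 < Fsig g σ μ x := by
  unfold Fsig
  positivity

lemma Fsig_le_one : Fsig g σ μ x ≤ 1 :=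
  inv_le_one_of_one_le₀ (le_add_of_nonneg_right (Real.exp_pos _).le)

end Fsig

lemma Matrix.PosSemidef.of_sub_smul_one {n : Type*} [Fintype n] [DecidableEq n]
    {H : Matrix n n ℝ} {lam : ℝ} (hlam : 0 ≤ lam) (hH : (H - lam • 1).PosSemidef) :
    H.PosSemidef := by
  simpa using hH.add (PosSemidef.one.smul hlam)

lemma Matrix.posSemidef_smul_vecMulVec_add_smul {n : Type*} [Fintype n]
    {a b : ℝ} (ha : 0 ≤ a) (hb : 0 ≤ b) (v : n → ℝ) {H : Matrix n n ℝ}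
    (hH : H.PosSemidef) : (a • vecMulVec v v + b • H).PosSemidef :=
  ((posSemidef_vecMulVec_self_star v).smul ha).add (hH.smul hb)

theorem stmt15_general {d : ℕ} (g : EuclideanSpace ℝ (Fin d) → ℝ)
    (σ μ : ℝ) (hσ : 0 < σ)
    (gradg : EuclideanSpace ℝ (Fin d) → Fin d → ℝ)
    (Hg : EuclideanSpace ℝ (Fin d) → Matrix (Fin d) (Fin d) ℝ)
    (lam : ℝ) (hlam : 0 ≤ lam)
    (hconv : ∀ x, (Hg x - lam • 1).PosSemidef) :
    ∀ x,
      ((((1 - Fsig g σ μ x) * Fsig g σ μ x / σ ^ 2) •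
          Matrix.vecMulVec (gradg x) (gradg x)
        + ((1 - Fsig g σ μ x) / σ) • Hg x + 1)
        - (1 : Matrix (Fin d) (Fin d) ℝ)).PosSemidef := by
  intro x
  have hF : 0 ≤ 1 - Fsig g σ μ x := sub_nonneg.mpr (Fsig_le_one g σ μ x)
  have hF' := (Fsig_pos g σ μ x).le
  rw [add_sub_cancel_right]
  exact posSemidef_smul_vecMulVec_add_smul (by positivity) (by positivity) (gradg x)
    ((hconv x).of_sub_smul_one hlam)

theorem stmt15 {d : ℕ} (g : EuclideanSpace ℝ (Fin d) → ℝ)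
    (σ μ : ℝ) (hσ : 0 < σ) (hμ : 0 < μ)
    (gradg : EuclideanSpace ℝ (Fin d) → Fin d → ℝ)
    (Hg : EuclideanSpace ℝ (Fin d) → Matrix (Fin d) (Fin d) ℝ)
    (lam : ℝ) (hlam : 0 ≤ lam)
    (hsymm : ∀ x, (Hg x).IsSymm)
    (hconv : ∀ x, (Hg x - lam • 1).PosSemidef) :
    ∀ x,
      ((((1 - Fsig g σ μ x) * Fsig g σ μ x / σ ^ 2) •
          Matrix.vecMulVec (gradg x) (gradg x)
        + ((1 - Fsig g σ μ x) / σ) • Hg x + 1)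
        - (1 : Matrix (Fin d) (Fin d) ℝ)).PosSemidef :=
  stmt15_general g σ μ hσ gradg Hg lam hlam hconv
end
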